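/- arXiv:1809.03861 — 6 statements merged into one kernel-verified Lean document; each statement's English description precedes it below -/
import Mathlib

section
/- For any family Γ of rectifiable curves in a metric measure space, the AM-version of the ∞-modulus equals the ∞-modulus: AM_∞(Γ) = Mod_∞(Γ). -/
open MeasureTheory Filter Set Metric Topology

/-- A (compact, rectifiable) curve in `X`, given by an arclength-type
parametrization: a `1`-Lipschitz map on a nondegenerate compact interval. -/
structure Curve (X : Type*) [MetricSpace X] where
  a : ℝ
  b : ℝ
  hab : a < b
  toFun : ℝ → X
  lip : LipschitzOnWith 1 toFun (Set.Icc a b)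

/-- The "line integral" `∫_γ ρ ds` of a nonnegative Borel function along an
arclength-parametrized curve. -/
noncomputable def Curve.lineIntegral {X : Type*} [MetricSpace X] (γ : Curve X)
    (ρ : X → ENNReal) : ENNReal :=
  ∫⁻ t in Set.Icc γ.a γ.b, ρ (γ.toFun t)

/-- `ρ` is admissible for the curve family `Γ`. -/
def Admissible {X : Type*} [MetricSpace X] [MeasurableSpace X]
    (Γ : Set (Curve X)) (ρ : X → ENNReal) : Prop :=
  Measurable ρ ∧ ∀ γ ∈ Γ, 1 ≤ γ.lineIntegral ρ

/-- The sequence `(ρ i)` is admissible for `Γ` in the sequential (AM) sense. -/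
def SeqAdmissible {X : Type*} [MetricSpace X] [MeasurableSpace X]
    (Γ : Set (Curve X)) (ρ : ℕ → X → ENNReal) : Prop :=
  (∀ i, Measurable (ρ i)) ∧
    ∀ γ ∈ Γ, 1 ≤ Filter.atTop.liminf fun i => γ.lineIntegral (ρ i)

/-- The `1`-modulus of a curve family. -/
noncomputable def Mod1 {X : Type*} [MetricSpace X] [MeasurableSpace X]
    (μ : Measure X) (Γ : Set (Curve X)) : ENNReal :=
  ⨅ (ρ : X → ENNReal) (_ : Admissible Γ ρ), ∫⁻ x, ρ x ∂μ

/-- The AM-modulus of a curve family. -/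
noncomputable def AMmod {X : Type*} [MetricSpace X] [MeasurableSpace X]
    (μ : Measure X) (Γ : Set (Curve X)) : ENNReal :=
  ⨅ (ρ : ℕ → X → ENNReal) (_ : SeqAdmissible Γ ρ),
    Filter.atTop.liminf fun i => ∫⁻ x, ρ i x ∂μ

/-- The `∞`-modulus of a curve family. -/
noncomputable def ModInf {X : Type*} [MetricSpace X] [MeasurableSpace X]
    (μ : Measure X) (Γ : Set (Curve X)) : ENNReal :=
  ⨅ (ρ : X → ENNReal) (_ : Admissible Γ ρ), essSup ρ μ

/-- The sequential (AM) version of the `∞`-modulus of a curve family. -/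
noncomputable def AMInf {X : Type*} [MetricSpace X] [MeasurableSpace X]
    (μ : Measure X) (Γ : Set (Curve X)) : ENNReal :=
  ⨅ (ρ : ℕ → X → ENNReal) (_ : SeqAdmissible Γ ρ),
    Filter.atTop.liminf fun i => essSup (ρ i) μ

/-- `AM_∞(Γ) = Mod_∞(Γ)` for every family of curves. -/
theorem AMInf_eq_ModInf {X : Type*} [MetricSpace X] [MeasurableSpace X]
    (μ : Measure X) (Γ : Set (Curve X)) :
    AMInf μ Γ = ModInf μ Γ := by
  apply le_antisymm
  · -- AMInf ≤ ModInf : use constant sequences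
    refine le_iInf₂ fun ρ hρ => ?_
    have : SeqAdmissible Γ (fun _ => ρ) :=
      ⟨fun _ => hρ.1, fun γ hγ => by
        simpa [Filter.liminf_const] using hρ.2 γ hγ⟩
    calc AMInf μ Γ ≤ Filter.atTop.liminf fun _ : ℕ => essSup ρ μ :=
          iInf₂_le _ this
      _ = essSup ρ μ := Filter.liminf_const _
  · -- ModInf ≤ AMInf
    refine le_iInf₂ fun ρ hρ => ?_
    set L := Filter.atTop.liminf fun i => essSup (ρ i) μ with hL
    refine le_of_forall_gt_imp_ge_of_dense fun c hc => ?_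
    -- frequently essSup (ρ i) μ < c
    have hfreq : ∃ᶠ i in Filter.atTop, essSup (ρ i) μ < c := by
      by_contra h
      have h' : ∀ᶠ i in Filter.atTop, c ≤ essSup (ρ i) μ := by
        simpa [not_frequently, not_lt] using h
      have : c ≤ L := le_liminf_of_le (by isBoundedDefault) h'
      exact absurd hc (not_lt.2 this)
    obtain ⟨φ, hφ, hφc⟩ := Filter.extraction_of_frequently_atTop hfreq
    set σ : X → ENNReal := fun x => ⨆ k, ρ (φ k) x with hσ
    have hσmeas : Measurable σ := Measurable.iSup fun k => hρ.1 (φ k)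
    have hadm : Admissible Γ σ := by
      refine ⟨hσmeas, fun γ hγ => ?_⟩
      have h1 : (1 : ENNReal) ≤ Filter.atTop.liminf fun i => γ.lineIntegral (ρ i) :=
        hρ.2 γ hγ
      have h2 : Filter.atTop.liminf (fun i => γ.lineIntegral (ρ i)) ≤
          Filter.atTop.liminf fun k => γ.lineIntegral (ρ (φ k)) := by
        have hmap : Filter.map φ Filter.atTop ≤ Filter.atTop :=
          hφ.tendsto_atTop
        have := Filter.liminf_le_liminf_of_le (u := fun i => γ.lineIntegral (ρ i)) hmap
        rw [← Filter.liminf_comp] at this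
        simpa [Function.comp_def] using this
      have h3 : Filter.atTop.liminf (fun k => γ.lineIntegral (ρ (φ k))) ≤
          ⨆ k, γ.lineIntegral (ρ (φ k)) := by
        refine Filter.liminf_le_of_frequently_le ?_
        exact Filter.Frequently.of_forall fun k => le_iSup (fun k => γ.lineIntegral (ρ (φ k))) k
      have h4 : (⨆ k, γ.lineIntegral (ρ (φ k))) ≤ γ.lineIntegral σ := by
        refine iSup_le fun k => ?_
        unfold Curve.lineIntegral
        exact lintegral_mono fun t => le_iSup (fun k => ρ (φ k) (γ.toFun t)) k
      exact h1.trans (h2.trans (h3.trans h4))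
    have hess : essSup σ μ ≤ c := by
      have hae : ∀ k, ∀ᵐ x ∂μ, ρ (φ k) x ≤ c := fun k =>
        (ae_lt_of_essSup_lt (hφc k)).mono fun x hx => hx.le
      have : ∀ᵐ x ∂μ, σ x ≤ c := by
        filter_upwards [ae_all_iff.2 hae] with x hx
        exact iSup_le hx
      exact essSup_le_of_ae_le _ this
    calc ModInf μ Γ ≤ essSup σ μ := iInf₂_le _ hadm
      _ ≤ c := hess
end

section
/- If every curve in Γ is contained in a fixed ball B of finite measure, then limsup_{p→∞} [Mod_p(Γ)]^{1/p} ≤ Mod_∞(Γ). -/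
open MeasureTheory Filter Set Metric Topology

/-- The `p`-modulus of a curve family, for `1 ≤ p < ∞`. -/
noncomputable def ModulusP {X : Type*} [MetricSpace X] [MeasurableSpace X]
    (μ : Measure X) (Γ : Set (Curve X)) (p : ℝ) : ENNReal :=
  ⨅ (ρ : X → ENNReal) (_ : Admissible Γ ρ), ∫⁻ x, ρ x ^ p ∂μ

/-- if every curve of `Γ` is contained in a fixed ball `B` of finite
measure, then `limsup_{p→∞} Mod_p(Γ)^{1/p} ≤ Mod_∞(Γ)`. -/
theorem limsup_rpow_ModulusP_le_ModInf {X : Type*} [MetricSpace X] [MeasurableSpace X]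
    (μ : Measure X) (Γ : Set (Curve X)) (x₀ : X) (r : ℝ)
    (hsub : ∀ γ ∈ Γ, ∀ t ∈ Set.Icc γ.a γ.b, γ.toFun t ∈ Metric.ball x₀ r)
    (hfin : μ (Metric.ball x₀ r) ≠ ⊤) :
    Filter.limsup (fun p : ℝ => ModulusP μ Γ p ^ (1 / p)) Filter.atTop ≤ ModInf μ Γ := by
  rw [ModInf]
  refine le_iInf₂ fun ρ hρ => ?_
  set B : Set X := Metric.ball x₀ r with hB
  set M : ENNReal := essSup ρ μ with hM
  set C : ENNReal := μ B with hC
  -- a measurable hull of `B`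
  set S : Set X := toMeasurable μ B with hS
  have hSmeas : MeasurableSet S := measurableSet_toMeasurable μ B
  have hBS : B ⊆ S := subset_toMeasurable μ B
  have hSμ : μ S = C := measure_toMeasurable B
  -- the modified density
  set ρ' : X → ENNReal := S.indicator (fun x => max (ρ x) M) with hρ'
  have hρ'meas : Measurable ρ' :=
    (hρ.1.max measurable_const).indicator hSmeas
  have hρ'adm : Admissible Γ ρ' := by
    refine ⟨hρ'meas, fun γ hγ => ?_⟩
    refine le_trans (hρ.2 γ hγ) ?_
    unfold Curve.lineIntegral
    refine setLIntegral_mono' measurableSet_Icc fun t ht => ?_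
    have hmem : γ.toFun t ∈ S := hBS (hsub γ hγ t ht)
    simp only [hρ', Set.indicator_of_mem hmem]
    exact le_max_left _ _
  -- the key bound on `ModulusP` for positive `p`
  have key : ∀ p : ℝ, 0 < p → ModulusP μ Γ p ≤ M ^ p * C := by
    intro p hp
    refine le_trans (iInf₂_le ρ' hρ'adm) ?_
    have hbound : ∀ᵐ x ∂μ, ρ' x ^ p ≤ S.indicator (fun _ => M ^ p) x := by
      filter_upwards [ae_le_essSup (f := ρ) (μ := μ)] with x hx
      by_cases hxB : x ∈ S
      · simp only [hρ', Set.indicator_of_mem hxB]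
        rw [max_eq_right hx]
      · simp only [hρ', Set.indicator_of_notMem hxB]
        simp [ENNReal.zero_rpow_of_pos hp]
    calc ∫⁻ x, ρ' x ^ p ∂μ ≤ ∫⁻ x, S.indicator (fun _ => M ^ p) x ∂μ :=
          lintegral_mono_ae hbound
      _ = M ^ p * C := by
          rw [lintegral_indicator hSmeas, setLIntegral_const, hSμ]
  by_cases hM0 : M = ⊤
  · rw [hM0]; exact le_top
  by_cases hC0 : C = 0
  · -- measure zero: everything vanishes
    have hev : ∀ᶠ p : ℝ in Filter.atTop, ModulusP μ Γ p ^ (1 / p) = 0 := by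
      filter_upwards [Filter.eventually_ge_atTop (1 : ℝ)] with p hp
      have hp0 : 0 < p := lt_of_lt_of_le one_pos hp
      have h0 : ModulusP μ Γ p = 0 := by
        have := key p hp0
        rwa [hC0, mul_zero, le_zero_iff] at this
      rw [h0, ENNReal.zero_rpow_of_pos (by positivity)]
    calc Filter.limsup (fun p : ℝ => ModulusP μ Γ p ^ (1 / p)) Filter.atTop
        = Filter.limsup (fun _ : ℝ => (0 : ENNReal)) Filter.atTop :=
          Filter.limsup_congr hev
      _ = 0 := Filter.limsup_const 0
      _ ≤ M := zero_le
  -- main case : 0 < C < ∞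
  have hev : ∀ᶠ p : ℝ in Filter.atTop,
      ModulusP μ Γ p ^ (1 / p) ≤ M * C ^ (1 / p) := by
    filter_upwards [Filter.eventually_ge_atTop (1 : ℝ)] with p hp
    have hp0 : 0 < p := lt_of_lt_of_le one_pos hp
    calc ModulusP μ Γ p ^ (1 / p) ≤ (M ^ p * C) ^ (1 / p) :=
          ENNReal.rpow_le_rpow (key p hp0) (by positivity)
      _ = M * C ^ (1 / p) := by
          rw [ENNReal.mul_rpow_of_nonneg _ _ (by positivity), ← ENNReal.rpow_mul,
            mul_one_div_cancel hp0.ne', ENNReal.rpow_one]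
  have hTC : Filter.Tendsto (fun p : ℝ => C ^ (1 / p)) Filter.atTop (𝓝 1) := by
    lift C to NNReal using hfin with c hc
    have hc0 : c ≠ 0 := by simpa using hC0
    have h1 : Filter.Tendsto (fun p : ℝ => (1 : ℝ) / p) Filter.atTop (𝓝 0) := by
      simpa only [one_div] using tendsto_inv_atTop_zero
    have h2 : Filter.Tendsto (fun p : ℝ => c ^ (1 / p)) Filter.atTop (𝓝 (c ^ (0 : ℝ))) :=
      Filter.Tendsto.nnrpow tendsto_const_nhds h1 (Or.inl hc0)
    have h3 := (ENNReal.continuous_coe.tendsto _).comp h2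
    simp only [NNReal.rpow_zero, ENNReal.coe_one, Function.comp] at h3
    refine h3.congr fun p => ?_
    simp only [Function.comp]
    exact ENNReal.coe_rpow_of_ne_zero hc0 _
  have hTg : Filter.Tendsto (fun p : ℝ => M * C ^ (1 / p)) Filter.atTop (𝓝 M) := by
    have := ENNReal.Tendsto.const_mul (a := M) hTC (Or.inr hM0)
    simpa using this
  calc Filter.limsup (fun p : ℝ => ModulusP μ Γ p ^ (1 / p)) Filter.atTop
      ≤ Filter.limsup (fun p : ℝ => M * C ^ (1 / p)) Filter.atTop :=
        Filter.limsup_le_limsup hev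
    _ = M := hTg.limsup_eq
end

section
/- If u ∈ BV(X), i.e. there exist locally Lipschitz functions u_i → u in L¹(X) with upper gradients g_i satisfying liminf_i ∫_X g_i dμ < ∞, then there is a set N ⊂ X with μ(N) = 0 and a subsequence (still denoted g_i) such that for every non-constant compact rectifiable curve γ with endpoints x, y ∈ X \ N, one has |u(y) − u(x)| ≤ liminf_{i→∞} ∫_γ g_i ds. -/
open MeasureTheory Filter Set Metric Topology

/-- `g` is an upper gradient of `f`: `|f(γ(b)) - f(γ(a))| ≤ ∫_γ g ds` for every
compact rectifiable curve. -/
def IsUpperGradient {X : Type*} [MetricSpace X] (f : X → ℝ) (g : X → ENNReal) : Prop :=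
  ∀ γ : Curve X,
    ENNReal.ofReal |f (γ.toFun γ.b) - f (γ.toFun γ.a)| ≤ γ.lineIntegral g

/-- if `u ∈ BV(X)`, witnessed by locally Lipschitz `u_i → u` in `L¹(μ)`
with upper gradients `g_i` such that `liminf_i ∫ g_i dμ < ∞`, then there is a null
set `N` and a subsequence such that for every non-constant compact rectifiable
curve `γ` with endpoints `x, y ∉ N`, `|u(y) - u(x)| ≤ liminf_i ∫_γ g_i ds`. -/
theorem bv_curvewise_bound {X : Type*} [MetricSpace X] [MeasurableSpace X]
    [OpensMeasurableSpace X] (μ : Measure X) (u : X → ℝ) (hu : Measurable u)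
    (ui : ℕ → X → ℝ) (g : ℕ → X → ENNReal)
    (hlip : ∀ i, LocallyLipschitz (ui i))
    (hL1 : Filter.Tendsto (fun i => ∫⁻ x, ENNReal.ofReal |ui i x - u x| ∂μ)
      Filter.atTop (nhds 0))
    (hug : ∀ i, IsUpperGradient (ui i) (g i))
    (hgm : ∀ i, Measurable (g i))
    (hfin : (Filter.atTop.liminf fun i => ∫⁻ x, g i x ∂μ) < ⊤) :
    ∃ (N : Set X) (φ : ℕ → ℕ), μ N = 0 ∧ StrictMono φ ∧
      ∀ γ : Curve X, γ.toFun γ.a ∉ N → γ.toFun γ.b ∉ N →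
        ENNReal.ofReal |u (γ.toFun γ.b) - u (γ.toFun γ.a)| ≤
          Filter.atTop.liminf fun i => γ.lineIntegral (g (φ i)) := by
  -- L¹ convergence implies convergence in measure
  have hmeas : ∀ i, AEStronglyMeasurable (ui i) μ := fun i =>
    ((hlip i).continuous).aestronglyMeasurable
  have hL1' : Tendsto (fun i => eLpNorm (ui i - u) 1 μ) atTop (nhds 0) := by
    convert hL1 using 2 with i
    rw [eLpNorm_one_eq_lintegral_enorm]
    congr 1 with x
    simp [Pi.sub_apply, ← ofReal_norm_eq_enorm, Real.norm_eq_abs]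
  have htm : TendstoInMeasure μ ui atTop u :=
    tendstoInMeasure_of_tendsto_eLpNorm one_ne_zero hmeas
      hu.aestronglyMeasurable hL1'
  obtain ⟨φ, hφ, hae⟩ := htm.exists_seq_tendsto_ae
  refine ⟨{x | ¬ Tendsto (fun i => ui (φ i) x) atTop (nhds (u x))}, φ, ?_, hφ, ?_⟩
  · exact hae
  · intro γ hx hy
    simp only [Set.mem_setOf_eq, not_not] at hx hy
    have htend : Tendsto
        (fun i => ENNReal.ofReal |ui (φ i) (γ.toFun γ.b) - ui (φ i) (γ.toFun γ.a)|)
        atTop (nhds (ENNReal.ofReal |u (γ.toFun γ.b) - u (γ.toFun γ.a)|)) := by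
      exact (ENNReal.continuous_ofReal.tendsto _).comp
        ((continuous_abs.tendsto _).comp (hy.sub hx))
    rw [← htend.liminf_eq]
    exact Filter.liminf_le_liminf (Filter.Eventually.of_forall fun i => hug (φ i) γ)
end

section
/- Suppose X supports an AM-Poincaré inequality with constants C, λ, and u has a weak AM-upper gradient g ∈ L¹(X) with exceptional curve family Γ of AM-modulus zero. Then u satisfies the ordinary 1-Poincaré inequality with g: for every ball B, ⨍_B |u − u_B| dμ ≤ C·rad(B)·⨍_{λB} g dμ. -/
open MeasureTheory Filter Set Metric Topology

/-- `(g i)` is a `BV_AM`-upper bound of `u`: a sequence of nonnegative Borel `L¹`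
functions such that, outside a curve family of AM-modulus zero, for `H¹`-a.e. pair
`s < t` in the domain of the curve, `|u(γ(t)) - u(γ(s))| ≤ liminf_i ∫_{γ|[s,t]} g_i ds`,
and `liminf_i ∫_X g_i dμ < ∞`. -/
def BVAMUpperBound {X : Type*} [MetricSpace X] [MeasurableSpace X]
    (μ : Measure X) (u : X → ℝ) (g : ℕ → X → ENNReal) : Prop :=
  (∀ i, Measurable (g i)) ∧ (∀ i, ∫⁻ x, g i x ∂μ ≠ ⊤) ∧
  (Filter.atTop.liminf fun i => ∫⁻ x, g i x ∂μ) < ⊤ ∧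
  ∃ Γ : Set (Curve X), AMmod μ Γ = 0 ∧
    ∀ γ : Curve X, γ ∉ Γ → ∃ N : Set ℝ, volume N = 0 ∧
      ∀ s ∈ Set.Icc γ.a γ.b, ∀ t ∈ Set.Icc γ.a γ.b, s ∉ N → t ∉ N → s < t →
        ENNReal.ofReal |u (γ.toFun t) - u (γ.toFun s)| ≤
          Filter.atTop.liminf fun i => ∫⁻ r in Set.Icc s t, g i (γ.toFun r)

/-- `X` supports an AM-Poincaré inequality with constants `C`, `λ`. -/
def AMPoincare {X : Type*} [MetricSpace X] [MeasurableSpace X]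
    (μ : Measure X) (C lam : ℝ) : Prop :=
  ∀ (u : X → ℝ) (g : ℕ → X → ENNReal), BVAMUpperBound μ u g →
    ∀ (x : X) (r : ℝ), 0 < r →
      (μ (Metric.ball x r))⁻¹ *
          ∫⁻ y in Metric.ball x r,
            ENNReal.ofReal |u y - ⨍ z in Metric.ball x r, u z ∂μ| ∂μ ≤
        ENNReal.ofReal (C * r) * Filter.atTop.liminf fun i =>
          (μ (Metric.ball x (lam * r)))⁻¹ *
            ∫⁻ y in Metric.ball x (lam * r), g i y ∂μ

/-- under an AM-Poincaré inequality, a function with a weak AM-upper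
gradient `g ∈ L¹(X)` satisfies the ordinary `1`-Poincaré inequality with `g`. -/
theorem amPoincare_weak_AM_gradient {X : Type*} [MetricSpace X] [MeasurableSpace X]
    (μ : Measure X) (C lam : ℝ) (hPI : AMPoincare μ C lam)
    (u : X → ℝ) (g : X → ENNReal) (hgm : Measurable g) (hgL1 : ∫⁻ x, g x ∂μ ≠ ⊤)
    (Γ : Set (Curve X)) (hΓ : AMmod μ Γ = 0)
    (hug : ∀ γ : Curve X, γ ∉ Γ →
      ENNReal.ofReal |u (γ.toFun γ.b) - u (γ.toFun γ.a)| ≤ γ.lineIntegral g) :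
    ∀ (x : X) (r : ℝ), 0 < r →
      (μ (Metric.ball x r))⁻¹ *
          ∫⁻ y in Metric.ball x r,
            ENNReal.ofReal |u y - ⨍ z in Metric.ball x r, u z ∂μ| ∂μ ≤
        ENNReal.ofReal (C * r) *
          ((μ (Metric.ball x (lam * r)))⁻¹ *
            ∫⁻ y in Metric.ball x (lam * r), g y ∂μ) := by
  -- Enlarge Γ to the family Γ' of curves having a subcurve in Γ.
  set Γ' : Set (Curve X) :=
    {γ : Curve X | ∃ γ' ∈ Γ, γ'.toFun = γ.toFun ∧ γ.a ≤ γ'.a ∧ γ'.b ≤ γ.b} with hΓ'def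
  -- Line integrals are monotone under restriction, so admissibility transfers.
  have hsub : ∀ (ρ : X → ENNReal) (γ' γ : Curve X), γ'.toFun = γ.toFun →
      γ.a ≤ γ'.a → γ'.b ≤ γ.b → γ'.lineIntegral ρ ≤ γ.lineIntegral ρ := by
    intro ρ γ' γ hfun h1 h2
    unfold Curve.lineIntegral
    rw [hfun]
    exact lintegral_mono_set (Set.Icc_subset_Icc h1 h2)
  have hΓ'0 : AMmod μ Γ' = 0 := by
    refine le_antisymm ?_ zero_le
    rw [← hΓ]
    refine le_iInf₂ fun ρ hρ => iInf₂_le ρ ?_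
    refine ⟨hρ.1, fun γ hγ => ?_⟩
    obtain ⟨γ', hγ'Γ, hfun, h1, h2⟩ := hγ
    refine le_trans (hρ.2 γ' hγ'Γ) ?_
    exact Filter.liminf_le_liminf
      (Filter.Eventually.of_forall fun i => hsub (ρ i) γ' γ hfun h1 h2)
  -- The constant sequence g is a BV_AM upper bound of u with exceptional family Γ'.
  have hBV : BVAMUpperBound μ u (fun _ => g) := by
    refine ⟨fun _ => hgm, fun _ => hgL1, ?_, Γ', hΓ'0, ?_⟩
    · rw [Filter.liminf_const]
      exact lt_top_iff_ne_top.mpr hgL1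
    · intro γ hγ
      refine ⟨∅, measure_empty, fun s hs t ht _ _ hst => ?_⟩
      set γst : Curve X :=
        ⟨s, t, hst, γ.toFun, γ.lip.mono (Set.Icc_subset_Icc hs.1 ht.2)⟩ with hγst
      have hγstΓ : γst ∉ Γ := by
        intro hmem
        exact hγ ⟨γst, hmem, rfl, hs.1, ht.2⟩
      have := hug γst hγstΓ
      rw [Filter.liminf_const]
      exact this
  intro x r hr
  have := hPI u (fun _ => g) hBV x r hr
  rwa [Filter.liminf_const] at this
end

section
/- With Γ^C_{xy} as above equipped with the graph-Hausdorff metric, for every continuous f : X → ℝ the functional Φ_f(γ, I) := ∫_I f(γ(t)) dt is continuous on Γ^C_{xy}. -/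
open Metric Set MeasureTheory

/-- A metric space is (metrically) doubling if there is `N` such that every ball
can be covered by at most `N` balls of half the radius. -/
def MetricDoubling (X : Type*) [MetricSpace X] : Prop :=
  ∃ N : ℕ, ∀ (x : X) (r : ℝ), ∃ s : Finset X,
    s.card ≤ N ∧ Metric.ball x r ⊆ ⋃ y ∈ s, Metric.ball y (r / 2)

lemma MetricDoubling.totallyBounded_ball {X : Type*} [MetricSpace X]
    (hX : MetricDoubling X) (x : X) (R : ℝ) : TotallyBounded (Metric.ball x R) := by
  classical
  obtain ⟨N, hN⟩ := hX
  have key : ∀ k : ℕ, ∃ t : Finset X, Metric.ball x R ⊆ ⋃ y ∈ t, Metric.ball y (R / 2 ^ k) := by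
    intro k
    induction k with
    | zero => exact ⟨{x}, by simp⟩
    | succ k ih =>
      obtain ⟨t, ht⟩ := ih
      choose g hg1 hg2 using fun y : X => hN y (R / 2 ^ k)
      refine ⟨t.biUnion g, ?_⟩
      intro z hz
      obtain ⟨y, hy, hzy⟩ := Set.mem_iUnion₂.1 (ht hz)
      obtain ⟨w, hw, hzw⟩ := Set.mem_iUnion₂.1 (hg2 y hzy)
      refine Set.mem_iUnion₂.2 ⟨w, Finset.mem_biUnion.2 ⟨y, hy, hw⟩, ?_⟩
      have : R / 2 ^ k / 2 = R / 2 ^ (k + 1) := by ring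
      rwa [this] at hzw
  rw [Metric.totallyBounded_iff]
  intro ε hε
  obtain ⟨k, hk⟩ : ∃ k : ℕ, R / 2 ^ k < ε := by
    obtain ⟨k, hk⟩ := pow_unbounded_of_one_lt (R / ε) (one_lt_two : (1:ℝ) < 2)
    refine ⟨k, ?_⟩
    have h2 : (0:ℝ) < 2 ^ k := by positivity
    rw [div_lt_iff₀ hε] at hk
    rw [div_lt_iff₀ h2]
    nlinarith
  obtain ⟨t, ht⟩ := key k
  exact ⟨t, t.finite_toSet, ht.trans (Set.iUnion₂_mono fun y _ => Metric.ball_subset_ball hk.le)⟩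

lemma MetricDoubling.isCompact_closedBall {X : Type*} [MetricSpace X] [CompleteSpace X]
    (hX : MetricDoubling X) (x : X) (r : ℝ) : IsCompact (Metric.closedBall x r) :=
  TotallyBounded.isCompact_of_isClosed
    ((hX.totallyBounded_ball x (r + 1)).subset
      (Metric.closedBall_subset_ball (by linarith)))
    Metric.isClosed_closedBall

/-- on `Γ^C_{xy}` with the graph-Hausdorff metric, the functional
`Φ_f(γ, I) = ∫_I f(γ(t)) dt` is continuous for every continuous `f : X → ℝ`:
in `ε`-`δ` form, at the point represented by the data `(b, γ)`. -/
theorem phi_f_continuous {X : Type*} [MetricSpace X] [CompleteSpace X]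
    (hX : MetricDoubling X) (x y : X) (hxy : x ≠ y) (C : ℝ) (hC : 1 ≤ C)
    (f : X → ℝ) (hf : Continuous f)
    (b : ℝ) (γ : ℝ → X) (hb : b ∈ Set.Icc (0:ℝ) (C * dist x y))
    (hγ : LipschitzOnWith 1 γ (Set.Icc 0 b)) (hγ0 : γ 0 = x) (hγb : γ b = y) :
    ∀ ε : ℝ, 0 < ε → ∃ δ : ℝ, 0 < δ ∧
      ∀ (b' : ℝ) (γ' : ℝ → X), b' ∈ Set.Icc (0:ℝ) (C * dist x y) →
        LipschitzOnWith 1 γ' (Set.Icc 0 b') → γ' 0 = x → γ' b' = y →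
        Metric.hausdorffDist ((fun t => (t, γ t)) '' Set.Icc 0 b)
            ((fun t => (t, γ' t)) '' Set.Icc 0 b') < δ →
        |(∫ t in Set.Icc (0:ℝ) b', f (γ' t)) - ∫ t in Set.Icc (0:ℝ) b, f (γ t)| < ε := by
  intro ε hε
  set L := C * dist x y with hLdef
  have hL0 : 0 < L := mul_pos (lt_of_lt_of_le one_pos hC) (dist_pos.2 hxy)
  have hKc : IsCompact (Metric.closedBall x L) := hX.isCompact_closedBall x L
  -- bound on f over the closed ball
  obtain ⟨M, hM⟩ := hKc.exists_bound_of_continuousOn hf.continuousOn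
  have hM0 : 0 ≤ M := (norm_nonneg _).trans (hM x (Metric.mem_closedBall_self hL0.le))
  -- uniform continuity
  set ε₁ := ε / (2 * (L + 1)) with hε₁def
  have hε₁ : 0 < ε₁ := by positivity
  obtain ⟨η, hη0, hη⟩ := Metric.uniformContinuousOn_iff.1
    (hKc.uniformContinuousOn_of_continuous hf.continuousOn) ε₁ hε₁
  set δ := min (η / 2 / 2) (ε / (4 * (M + 1))) with hδdef
  have hδ0 : 0 < δ := by
    apply lt_min <;> positivity
  refine ⟨δ, hδ0, ?_⟩
  intro b' γ' hb' hγ' hγ'0 hγ'b hH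
  have hb0 : (0:ℝ) ≤ b := hb.1
  have hb'0 : (0:ℝ) ≤ b' := hb'.1
  have h0b : (0:ℝ) ∈ Set.Icc (0:ℝ) b := ⟨le_refl _, hb0⟩
  have h0b' : (0:ℝ) ∈ Set.Icc (0:ℝ) b' := ⟨le_refl _, hb'0⟩
  -- graphs
  set G := (fun t => (t, γ t)) '' Set.Icc (0:ℝ) b with hGdef
  set G' := (fun t => (t, γ' t)) '' Set.Icc (0:ℝ) b' with hG'def
  have hGc : IsCompact G :=
    isCompact_Icc.image_of_continuousOn (continuousOn_id.prodMk hγ.continuousOn)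
  have hG'c : IsCompact G' :=
    isCompact_Icc.image_of_continuousOn (continuousOn_id.prodMk hγ'.continuousOn)
  have hfin : EMetric.hausdorffEdist G G' ≠ ⊤ :=
    Metric.hausdorffEdist_ne_top_of_nonempty_of_bounded
      ⟨_, Set.mem_image_of_mem _ h0b⟩ ⟨_, Set.mem_image_of_mem _ h0b'⟩
      hGc.isBounded hG'c.isBounded
  -- key approximation
  have keyA : ∀ t ∈ Set.Icc (0:ℝ) b, ∃ s ∈ Set.Icc (0:ℝ) b',
      |t - s| < δ ∧ dist (γ t) (γ' s) < δ := by
    intro t ht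
    obtain ⟨p, hp, hdp⟩ := Metric.exists_dist_lt_of_hausdorffDist_lt
      (Set.mem_image_of_mem _ ht) hH hfin
    obtain ⟨s, hs, rfl⟩ := hp
    rw [Prod.dist_eq, max_lt_iff] at hdp
    exact ⟨s, hs, by simpa [Real.dist_eq] using hdp.1, hdp.2⟩
  have keyB : ∀ s ∈ Set.Icc (0:ℝ) b', ∃ t ∈ Set.Icc (0:ℝ) b,
      |s - t| < δ ∧ dist (γ' s) (γ t) < δ := by
    intro s hs
    obtain ⟨p, hp, hdp⟩ := Metric.exists_dist_lt_of_hausdorffDist_lt'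
      (Set.mem_image_of_mem _ hs) hH hfin
    obtain ⟨t, ht, rfl⟩ := hp
    rw [Prod.dist_eq, max_lt_iff] at hdp
    refine ⟨t, ht, ?_, by simpa [dist_comm] using hdp.2⟩
    rw [abs_sub_comm]
    simpa [Real.dist_eq] using hdp.1
  -- endpoints are close
  have hbb' : |b - b'| < δ := by
    obtain ⟨s, hs, hts, _⟩ := keyA b ⟨hb0, le_refl b⟩
    obtain ⟨t, ht, hst, _⟩ := keyB b' ⟨hb'0, le_refl b'⟩
    rw [abs_sub_lt_iff] at hts hst ⊢
    constructor
    · calc b - b' ≤ b - s := by linarith [hs.2]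
        _ < δ := hts.1
    · calc b' - b ≤ b' - t := by linarith [ht.2]
        _ < δ := hst.1
  set m := min b b' with hmdef
  have hm0 : (0:ℝ) ≤ m := le_min hb0 hb'0
  have hmb : m ≤ b := min_le_left _ _
  have hmb' : m ≤ b' := min_le_right _ _
  have hbm : b - m < δ := by
    rcases min_cases b b' with ⟨h1, _⟩ | ⟨h1, h2⟩
    · rw [hmdef, h1]; simpa using hδ0
    · rw [hmdef, h1]
      calc b - b' ≤ |b - b'| := le_abs_self _
        _ < δ := hbb'
  have hb'm : b' - m < δ := by
    rcases min_cases b b' with ⟨h1, h2⟩ | ⟨h1, _⟩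
    · rw [hmdef, h1]
      calc b' - b ≤ |b - b'| := by rw [abs_sub_comm]; exact le_abs_self _
        _ < δ := hbb'
    · rw [hmdef, h1]; simpa using hδ0
  -- curves take values in the closed ball
  have hmemγ : ∀ t ∈ Set.Icc (0:ℝ) b, γ t ∈ Metric.closedBall x L := by
    intro t ht
    rw [Metric.mem_closedBall, ← hγ0]
    calc dist (γ t) (γ 0) ≤ 1 * dist t 0 := hγ.dist_le_mul t ht 0 h0b
      _ = |t| := by rw [one_mul, Real.dist_eq, sub_zero]
      _ = t := abs_of_nonneg ht.1
      _ ≤ L := ht.2.trans hb.2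
  have hmemγ' : ∀ t ∈ Set.Icc (0:ℝ) b', γ' t ∈ Metric.closedBall x L := by
    intro t ht
    rw [Metric.mem_closedBall, ← hγ'0]
    calc dist (γ' t) (γ' 0) ≤ 1 * dist t 0 := hγ'.dist_le_mul t ht 0 h0b'
      _ = |t| := by rw [one_mul, Real.dist_eq, sub_zero]
      _ = t := abs_of_nonneg ht.1
      _ ≤ L := ht.2.trans hb'.2
  -- pointwise closeness on [0, m]
  have hclose : ∀ t ∈ Set.Icc (0:ℝ) m, |f (γ' t) - f (γ t)| ≤ ε₁ := by
    intro t ht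
    have htb : t ∈ Set.Icc (0:ℝ) b := ⟨ht.1, ht.2.trans hmb⟩
    have htb' : t ∈ Set.Icc (0:ℝ) b' := ⟨ht.1, ht.2.trans hmb'⟩
    obtain ⟨s, hs, hts, hds⟩ := keyA t htb
    have hst : dist (γ' s) (γ' t) < δ := by
      calc dist (γ' s) (γ' t) ≤ 1 * dist s t := hγ'.dist_le_mul s hs t htb'
        _ = |t - s| := by rw [one_mul, Real.dist_eq, abs_sub_comm]
        _ < δ := hts
    have hd : dist (γ t) (γ' t) < η := by
      calc dist (γ t) (γ' t) ≤ dist (γ t) (γ' s) + dist (γ' s) (γ' t) := dist_triangle _ _ _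
        _ < δ + δ := add_lt_add hds hst
        _ ≤ η / 2 / 2 + η / 2 / 2 := add_le_add (min_le_left _ _) (min_le_left _ _)
        _ < η := by linarith
    have := hη (γ' t) (hmemγ' t htb') (γ t) (hmemγ t htb) (by rwa [dist_comm])
    rw [Real.dist_eq] at this
    exact this.le
  have hδε : δ ≤ ε / (4 * (M + 1)) := min_le_right _ _
  -- integrability
  have hintγ : IntegrableOn (fun t => f (γ t)) (Set.Icc (0:ℝ) b) volume :=
    (hf.comp_continuousOn hγ.continuousOn).integrableOn_compact isCompact_Icc
  have hintγ' : IntegrableOn (fun t => f (γ' t)) (Set.Icc (0:ℝ) b') volume :=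
    (hf.comp_continuousOn hγ'.continuousOn).integrableOn_compact isCompact_Icc
  -- splitting
  have hdisj : ∀ c : ℝ, Disjoint (Set.Icc (0:ℝ) m) (Set.Ioc m c) := by
    intro c
    rw [Set.disjoint_left]
    exact fun a ha ha' => absurd ha'.1 (not_lt.2 ha.2)
  have hsplit : ∀ (c : ℝ) (g : ℝ → ℝ), m ≤ c → IntegrableOn g (Set.Icc (0:ℝ) c) volume →
      ∫ t in Set.Icc (0:ℝ) c, g t = (∫ t in Set.Icc (0:ℝ) m, g t) + ∫ t in Set.Ioc m c, g t := by
    intro c g hmc hint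
    rw [← Set.Icc_union_Ioc_eq_Icc hm0 hmc] at hint ⊢
    exact setIntegral_union (hdisj c) measurableSet_Ioc
      (hint.mono_set Set.subset_union_left) (hint.mono_set Set.subset_union_right)
  rw [hsplit b _ hmb hintγ, hsplit b' _ hmb' hintγ']
  -- bounds on the three pieces
  have hfin1 : volume (Set.Icc (0:ℝ) m) < ⊤ := by
    rw [Real.volume_Icc]; exact ENNReal.ofReal_lt_top
  have hfin2 : ∀ c : ℝ, volume (Set.Ioc m c) < ⊤ := by
    intro c; rw [Real.volume_Ioc]; exact ENNReal.ofReal_lt_top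
  have bound1 : |∫ t in Set.Icc (0:ℝ) m, (f (γ' t) - f (γ t))| ≤ ε₁ * m := by
    have := norm_setIntegral_le_of_norm_le_const hfin1
      (f := fun t => f (γ' t) - f (γ t)) (C := ε₁)
      (fun t ht => by simpa [Real.norm_eq_abs] using hclose t ht)
    rwa [measureReal_def, Real.volume_Icc, sub_zero, ENNReal.toReal_ofReal hm0, Real.norm_eq_abs] at this
  have bound2 : |∫ t in Set.Ioc m b', f (γ' t)| ≤ M * (b' - m) := by
    have := norm_setIntegral_le_of_norm_le_const (hfin2 b')
      (f := fun t => f (γ' t)) (C := M)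
      (fun t ht => hM (γ' t) (hmemγ' t ⟨hm0.trans ht.1.le, ht.2⟩))
    rwa [measureReal_def, Real.volume_Ioc, ENNReal.toReal_ofReal (by linarith), Real.norm_eq_abs] at this
  have bound3 : |∫ t in Set.Ioc m b, f (γ t)| ≤ M * (b - m) := by
    have := norm_setIntegral_le_of_norm_le_const (hfin2 b)
      (f := fun t => f (γ t)) (C := M)
      (fun t ht => hM (γ t) (hmemγ t ⟨hm0.trans ht.1.le, ht.2⟩))
    rwa [measureReal_def, Real.volume_Ioc, ENNReal.toReal_ofReal (by linarith), Real.norm_eq_abs] at this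
  have hdiff : (∫ t in Set.Icc (0:ℝ) m, f (γ' t)) - ∫ t in Set.Icc (0:ℝ) m, f (γ t)
      = ∫ t in Set.Icc (0:ℝ) m, (f (γ' t) - f (γ t)) := by
    rw [integral_sub (hintγ'.mono_set (Set.Icc_subset_Icc_right hmb'))
      (hintγ.mono_set (Set.Icc_subset_Icc_right hmb))]
  have hmL : m ≤ L := hmb.trans hb.2
  have e1 : ε₁ * m < ε / 2 := by
    rw [hε₁def]
    rw [div_mul_eq_mul_div, div_lt_div_iff₀ (by positivity) (by norm_num)]
    nlinarith
  have h2 : M * δ ≤ ε / 4 := by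
    have ha : M * δ ≤ (M + 1) * δ := mul_le_mul_of_nonneg_right (by linarith) hδ0.le
    have hbq : (M + 1) * δ ≤ (M + 1) * (ε / (4 * (M + 1))) :=
      mul_le_mul_of_nonneg_left hδε (by linarith)
    have h3 : (M + 1) * (ε / (4 * (M + 1))) = ε / 4 := by
      field_simp
    linarith
  have e2 : M * (b' - m) ≤ ε / 4 := by
    have h1 : M * (b' - m) ≤ M * δ := mul_le_mul_of_nonneg_left hb'm.le hM0
    linarith
  have e3 : M * (b - m) ≤ ε / 4 := by
    have h1 : M * (b - m) ≤ M * δ := mul_le_mul_of_nonneg_left hbm.le hM0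
    linarith
  calc |((∫ t in Set.Icc (0:ℝ) m, f (γ' t)) + ∫ t in Set.Ioc m b', f (γ' t))
        - ((∫ t in Set.Icc (0:ℝ) m, f (γ t)) + ∫ t in Set.Ioc m b, f (γ t))|
      = |(∫ t in Set.Icc (0:ℝ) m, (f (γ' t) - f (γ t)))
          + ((∫ t in Set.Ioc m b', f (γ' t)) - ∫ t in Set.Ioc m b, f (γ t))| := by
        rw [← hdiff]; ring_nf
    _ ≤ |∫ t in Set.Icc (0:ℝ) m, (f (γ' t) - f (γ t))|
          + |(∫ t in Set.Ioc m b', f (γ' t)) - ∫ t in Set.Ioc m b, f (γ t)| := abs_add_le _ _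
    _ ≤ |∫ t in Set.Icc (0:ℝ) m, (f (γ' t) - f (γ t))|
          + (|∫ t in Set.Ioc m b', f (γ' t)| + |∫ t in Set.Ioc m b, f (γ t)|) := by
        gcongr; exact abs_sub _ _
    _ ≤ ε₁ * m + (M * (b' - m) + M * (b - m)) := by gcongr
    _ < ε / 2 + (ε / 4 + ε / 4) := by
        have := add_le_add e2 e3; linarith
    _ = ε := by ring
end

section
/- Let μ be doubling, ν a finite Radon measure, x, y ∈ X, C ≥ 1, and define I_{CB_{x,y}}ν(x) = ∫_{B(x, C d(x,y))} d(x,z)/μ(B(x,d(x,z))) dν(z). Then I_{CB_{x,y}}ν(x) ≤ C'·d(x,y)·h(x), where h(x) = sup_{0 < r ≤ C d(x,y)} ν(B(x,r))/μ(B(x,r)) and C' depends only on the doubling constant of μ and C. -/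
open MeasureTheory Set Metric
open scoped ENNReal NNReal

/-- for a doubling measure `μ` (with doubling constant `Cd`), a finite
Radon measure `ν` and `C ≥ 1`, the Riesz potential
`I_{CB_{x,y}}ν(x) = ∫_{B(x, C d(x,y))} d(x,z)/μ(B(x,d(x,z))) dν(z)` satisfies
`I_{CB_{x,y}}ν(x) ≤ C' d(x,y) h(x)` where
`h(x) = sup_{0 < r ≤ C d(x,y)} ν(B(x,r))/μ(B(x,r))` and `C'` depends only on
`Cd` and `C`. -/
theorem riesz_potential_le (Cd : NNReal) (C : ℝ) (hC : 1 ≤ C) :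
    ∃ C' : ENNReal, 0 < C' ∧ C' ≠ ⊤ ∧
      ∀ (X : Type) [MetricSpace X] [MeasurableSpace X] (μ ν : Measure X),
        (∀ (z : X) (r : ℝ), 0 < r → μ (Metric.ball z (2 * r)) ≤ Cd * μ (Metric.ball z r)) →
        ν Set.univ ≠ ⊤ →
        ∀ x y : X,
          (∫⁻ z in Metric.ball x (C * dist x y),
              ENNReal.ofReal (dist x z) / μ (Metric.ball x (dist x z)) ∂ν) ≤
            C' * ENNReal.ofReal (dist x y) *
              ⨆ r ∈ Set.Ioc (0:ℝ) (C * dist x y),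
                ν (Metric.ball x r) / μ (Metric.ball x r) := by
  classical
  have hC0 : (0:ℝ) < C := lt_of_lt_of_le one_pos hC
  have hoC : (0:ℝ≥0∞) < ENNReal.ofReal C := ENNReal.ofReal_pos.mpr hC0
  refine ⟨2 * ((Cd : ℝ≥0∞) + 1) * ENNReal.ofReal C, ?_, ?_, ?_⟩
  · refine ENNReal.mul_pos (mul_ne_zero ?_ ?_) hoC.ne'
    · norm_num
    · simp
  · exact ENNReal.mul_ne_top
      (ENNReal.mul_ne_top (by norm_num)
        (by simp [ENNReal.add_ne_top]))
      ENNReal.ofReal_ne_top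
  intro X _ _ μ ν hdoub hν x y
  set R : ℝ := C * dist x y with hRdef
  set f : X → ℝ≥0∞ := fun z => ENNReal.ofReal (dist x z) / μ (ball x (dist x z)) with hf
  set h : ℝ≥0∞ := ⨆ r ∈ Set.Ioc (0:ℝ) R, ν (ball x r) / μ (ball x r) with hh
  by_cases hR0 : R ≤ 0
  · rw [ball_eq_empty.mpr hR0]
    simp
  push_neg at hR0
  have hdxy : 0 < dist x y := by
    rcases lt_or_eq_of_le (dist_nonneg (x := x) (y := y)) with hd | hd
    · exact hd
    · exfalso; rw [hRdef, ← hd, mul_zero] at hR0; exact lt_irrefl _ hR0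
  by_cases hμ0 : μ (ball x R) = 0
  · by_cases hν0 : ν (ball x R) = 0
    · rw [Measure.restrict_eq_zero.mpr hν0, lintegral_zero_measure]
      exact zero_le
    · have hhtop : h = ⊤ := by
        refine top_le_iff.mp ?_
        have hmem : R ∈ Set.Ioc (0:ℝ) R := ⟨hR0, le_refl R⟩
        have h1 := le_biSup (f := fun r => ν (ball x r) / μ (ball x r)) hmem
        rw [hh]
        simpa [hμ0, ENNReal.div_zero hν0] using h1
      rw [hhtop, ENNReal.mul_top]
      · exact le_top
      · refine mul_ne_zero (mul_ne_zero ?_ ?_) ?_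
        · exact mul_ne_zero (by norm_num) (by simp)
        · exact hoC.ne'
        · exact (ENNReal.ofReal_pos.mpr hdxy).ne'
  -- positive case
  have hμpos : ∀ k : ℕ, μ (ball x (R / 2 ^ k)) ≠ 0 := by
    intro k
    induction k with
    | zero => simpa using hμ0
    | succ n ih =>
      intro hz
      apply ih
      have h2 : (2:ℝ) * (R / 2 ^ (n+1)) = R / 2 ^ n := by ring
      have hd := hdoub x (R / 2 ^ (n+1)) (by positivity)
      rw [h2, hz, mul_zero] at hd
      exact le_antisymm hd zero_le
  have hCd : (Cd : ℝ≥0∞) ≠ 0 := by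
    intro h0
    have hd := hdoub x (R / 2) (by positivity)
    rw [show (2:ℝ) * (R/2) = R by ring, h0, zero_mul] at hd
    exact hμ0 (le_antisymm hd zero_le)
  set A : ℕ → Set X := fun i => {z | R / 2 ^ (i+1) ≤ dist x z ∧ dist x z < R / 2 ^ i}
    with hA
  have hcover : ball x R ⊆ closedBall x 0 ∪ ⋃ i, A i := by
    intro z hz
    rw [mem_ball, dist_comm] at hz
    rcases eq_or_lt_of_le (dist_nonneg (x := x) (y := z)) with h0 | h0
    · left
      exact mem_closedBall.mpr (by rw [dist_comm]; exact le_of_eq h0.symm)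
    · right
      have hex : ∃ n : ℕ, R / 2 ^ n ≤ dist x z := by
        obtain ⟨n, hn⟩ := pow_unbounded_of_one_lt (R / dist x z) (one_lt_two (α := ℝ))
        refine ⟨n, ?_⟩
        rw [div_le_iff₀ (by positivity)]
        rw [div_lt_iff₀ h0] at hn
        nlinarith
      have hn0 : Nat.find hex ≠ 0 := by
        intro he
        have hs := Nat.find_spec hex
        rw [he] at hs
        simp only [pow_zero, div_one] at hs
        exact absurd hz (not_lt.mpr hs)
      obtain ⟨m, hm⟩ := Nat.exists_eq_succ_of_ne_zero hn0
      refine mem_iUnion.mpr ⟨m, ?_, ?_⟩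
      · have hs := Nat.find_spec hex
        rw [hm] at hs
        exact hs
      · have hs := Nat.find_min hex (by omega : m < Nat.find hex)
        push_neg at hs
        exact hs
  have hzero : ∫⁻ z in closedBall x 0, f z ∂ν ≤ 0 := by
    have : ∀ z ∈ closedBall x 0, f z ≤ (fun _ => (0:ℝ≥0∞)) z := by
      intro z hz
      have hd : dist x z = 0 :=
        le_antisymm (by rwa [mem_closedBall, dist_comm] at hz) dist_nonneg
      simp [hf, hd]
    calc ∫⁻ z in closedBall x 0, f z ∂ν ≤ ∫⁻ _ in closedBall x 0, (0:ℝ≥0∞) ∂ν :=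
          setLIntegral_mono measurable_const this
      _ = 0 := lintegral_zero
  have hterm : ∀ i : ℕ, ∫⁻ z in A i, f z ∂ν ≤
      ENNReal.ofReal R * 2⁻¹ ^ i * ((Cd : ℝ≥0∞) * h) := by
    intro i
    have hb : ∀ z ∈ A i, f z ≤
        ENNReal.ofReal (R / 2 ^ i) / μ (ball x (R / 2 ^ (i+1))) := by
      rintro z ⟨hz1, hz2⟩
      exact ENNReal.div_le_div (ENNReal.ofReal_le_ofReal hz2.le)
        (measure_mono (ball_subset_ball hz1))
    calc ∫⁻ z in A i, f z ∂ν
        ≤ ∫⁻ _ in A i, ENNReal.ofReal (R / 2 ^ i) / μ (ball x (R / 2 ^ (i+1))) ∂ν :=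
          setLIntegral_mono measurable_const hb
      _ = ENNReal.ofReal (R / 2 ^ i) / μ (ball x (R / 2 ^ (i+1))) * ν (A i) :=
          setLIntegral_const _ _
      _ ≤ ENNReal.ofReal (R / 2 ^ i) / μ (ball x (R / 2 ^ (i+1))) * ν (ball x (R / 2 ^ i)) := by
          gcongr
          exact fun z hz => mem_ball'.mpr hz.2
      _ = ENNReal.ofReal (R / 2 ^ i) *
            (ν (ball x (R / 2 ^ i)) / μ (ball x (R / 2 ^ (i+1)))) := by
          simp only [div_eq_mul_inv]
          ring
      _ ≤ ENNReal.ofReal (R / 2 ^ i) * ((Cd : ℝ≥0∞) * h) := by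
          gcongr
          have hd := hdoub x (R / 2 ^ (i+1)) (by positivity)
          rw [show (2:ℝ) * (R / 2 ^ (i+1)) = R / 2 ^ i by ring] at hd
          calc ν (ball x (R / 2 ^ i)) / μ (ball x (R / 2 ^ (i+1)))
              = (Cd : ℝ≥0∞) * ν (ball x (R / 2 ^ i)) /
                  ((Cd : ℝ≥0∞) * μ (ball x (R / 2 ^ (i+1)))) :=
                (ENNReal.mul_div_mul_left _ _ hCd (by simp)).symm
            _ ≤ (Cd : ℝ≥0∞) * ν (ball x (R / 2 ^ i)) / μ (ball x (R / 2 ^ i)) :=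
                ENNReal.div_le_div le_rfl hd
            _ = (Cd : ℝ≥0∞) * (ν (ball x (R / 2 ^ i)) / μ (ball x (R / 2 ^ i))) := by
                rw [mul_div_assoc]
            _ ≤ (Cd : ℝ≥0∞) * h := by
                gcongr
                have hmem : R / 2 ^ i ∈ Set.Ioc (0:ℝ) R :=
                  ⟨by positivity, div_le_self hR0.le (one_le_pow₀ one_le_two)⟩
                exact (le_biSup (f := fun r => ν (ball x r) / μ (ball x r)) hmem).trans
                  (le_of_eq hh.symm)
      _ = ENNReal.ofReal R * 2⁻¹ ^ i * ((Cd : ℝ≥0∞) * h) := by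
          congr 1
          rw [ENNReal.ofReal_div_of_pos (by positivity), ENNReal.ofReal_pow (by norm_num),
            ENNReal.ofReal_ofNat, div_eq_mul_inv, ← ENNReal.inv_pow]
  have hgeom : ∑' i : ℕ, ENNReal.ofReal R * 2⁻¹ ^ i * ((Cd : ℝ≥0∞) * h) =
      ENNReal.ofReal R * 2 * ((Cd : ℝ≥0∞) * h) := by
    rw [ENNReal.tsum_mul_right, ENNReal.tsum_mul_left, ENNReal.tsum_geometric,
      ENNReal.one_sub_inv_two, inv_inv]
  calc ∫⁻ z in ball x R, f z ∂ν
      ≤ ∫⁻ z in closedBall x 0 ∪ ⋃ i, A i, f z ∂ν := lintegral_mono_set hcover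
    _ ≤ (∫⁻ z in closedBall x 0, f z ∂ν) + ∫⁻ z in ⋃ i, A i, f z ∂ν :=
        lintegral_union_le _ _ _
    _ ≤ 0 + ∑' i : ℕ, ∫⁻ z in A i, f z ∂ν :=
        add_le_add hzero (lintegral_iUnion_le _ _)
    _ ≤ ∑' i : ℕ, ENNReal.ofReal R * 2⁻¹ ^ i * ((Cd : ℝ≥0∞) * h) := by
        rw [zero_add]
        exact ENNReal.tsum_le_tsum hterm
    _ = ENNReal.ofReal R * 2 * ((Cd : ℝ≥0∞) * h) := hgeom
    _ ≤ 2 * ((Cd : ℝ≥0∞) + 1) * ENNReal.ofReal C * ENNReal.ofReal (dist x y) * h := by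
        rw [hRdef, ENNReal.ofReal_mul hC0.le]
        calc ENNReal.ofReal C * ENNReal.ofReal (dist x y) * 2 * ((Cd : ℝ≥0∞) * h)
            ≤ ENNReal.ofReal C * ENNReal.ofReal (dist x y) * 2 * (((Cd : ℝ≥0∞) + 1) * h) := by
              gcongr
              exact le_self_add
          _ = 2 * ((Cd : ℝ≥0∞) + 1) * ENNReal.ofReal C * ENNReal.ofReal (dist x y) * h := by
              ring
end
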